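/- arXiv:0902.3081 — 2 statements merged into one kernel-verified Lean document; each statement's English description precedes it below -/
import Mathlib

section
/- Let T be a rooted tree with more than one node, of depth at most d. Then the spine of T (the path from the separator of T to the root) has length d' with 1 ≤ d' < d, and removing the spine breaks T into forests F_1,…,F_{d'} such that every tree in every F_i has at most |T|/2 nodes. -/
/-- A rooted forest on a finite vertex type `V`: each vertex has an optional
parent, and the depth of a root is `1` while the depth of a child is one more
than the depth of its parent (in particular the parent relation is acyclic). -/
structure RootedForest (V : Type) [Fintype V] where
  parent : V → Option V
  depth : V → ℕ
  depth_root : ∀ v, parent v = none → depth v = 1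
  depth_parent : ∀ v u, parent v = some u → depth v = depth u + 1

/-- `u` is a (strict) ancestor of `v`: `u` lies on the path from `v` to its root. -/
def RootedForest.Ancestor {V : Type} [Fintype V] (F : RootedForest V) (u v : V) : Prop :=
  Relation.TransGen (fun a b => F.parent a = some b) v u

/-- The set of descendants of `v` (including `v` itself), i.e. the subtree rooted at `v`. -/
def RootedForest.descSet {V : Type} [Fintype V] (F : RootedForest V) (v : V) : Set V :=
  {u : V | u = v ∨ F.Ancestor v u}

/-- `v` is a separator of the rooted tree `F`: removing `v` breaks the tree into the
subtrees rooted at the children of `v`, together with the remainder containing the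
root; all of these have at most `|V|/2` vertices. -/
def IsSeparator {V : Type} [Fintype V] (F : RootedForest V) (v : V) : Prop :=
  (∀ u : V, F.parent u = some v → 2 * (F.descSet u).ncard ≤ Fintype.card V) ∧
  2 * (Fintype.card V - (F.descSet v).ncard) ≤ Fintype.card V

/-!
Call a vertex heavy if its subtree holds more than half of the vertices; the root is heavy. Let
`v` be a deepest heavy vertex. Its children are not heavy by maximality, and the rest of the tree
is small because `v` is heavy, so `v` is a separator. Being heavy, the subtree of `v` has a second
vertex, which lies strictly deeper than `v`, so the depth of `v` is below `d`. Two heavy subtrees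
share a vertex, hence are nested because parents are unique; so every heavy vertex lies on the
spine, and the subtrees hanging off the spine are small.
-/

namespace RootedForest

open Relation

variable {V : Type} [Fintype V] (F : RootedForest V)

theorem depth_pos (v : V) : 1 ≤ F.depth v := by
  cases h : F.parent v with
  | none => rw [F.depth_root v h]
  | some u => rw [F.depth_parent v u h]; omega

def IsTree : Prop :=
  ∀ v w : V, F.parent v = none → F.parent w = none → v = w

variable {F}

theorem depth_lt_of_ancestor {u v : V} (h : F.Ancestor u v) : F.depth u < F.depth v := by
  induction h with
  | single h => rw [F.depth_parent _ _ h]; omega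
  | tail _ h _ => have := F.depth_parent _ _ h; omega

theorem mem_descSet_iff {u v : V} :
    u ∈ F.descSet v ↔ ReflTransGen (fun a b => F.parent a = some b) u v := by
  rw [reflTransGen_iff_eq_or_transGen, eq_comm]
  rfl

theorem mem_descSet_self (v : V) : v ∈ F.descSet v :=
  Or.inl rfl

theorem ancestor_of_mem_descSet_of_ne {u v : V} (h : u ∈ F.descSet v) (hne : u ≠ v) :
    F.Ancestor v u :=
  h.resolve_left hne

theorem mem_descSet_or_mem_descSet {a b w : V} (ha : w ∈ F.descSet a) (hb : w ∈ F.descSet b) :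
    a ∈ F.descSet b ∨ b ∈ F.descSet a := by
  simp only [mem_descSet_iff] at *
  have hfun : Relator.RightUnique fun a b => F.parent a = some b :=
    fun _ _ _ h₁ h₂ => Option.some_injective _ (h₁ ▸ h₂)
  exact ReflTransGen.total_of_right_unique hfun ha hb

theorem exists_root_mem_descSet (w : V) : ∃ r, F.parent r = none ∧ w ∈ F.descSet r := by
  classical
  obtain ⟨r, hr, hmin⟩ := Finset.exists_min_image {z | w ∈ F.descSet z} F.depth
    ⟨w, by simpa using mem_descSet_self w⟩
  simp only [Finset.mem_filter, Finset.mem_univ, true_and] at hr hmin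
  refine ⟨r, ?_, hr⟩
  cases hp : F.parent r with
  | none => rfl
  | some p =>
    have hwp : w ∈ F.descSet p :=
      mem_descSet_iff.2 ((mem_descSet_iff.1 hr).tail hp)
    have hle := hmin p hwp
    rw [F.depth_parent r p hp] at hle
    omega

theorem descSet_eq_univ_of_parent_eq_none (htree : F.IsTree) {r : V} (hr : F.parent r = none) :
    F.descSet r = Set.univ := by
  refine Set.eq_univ_of_forall fun w => ?_
  obtain ⟨r', hr', hw⟩ := F.exists_root_mem_descSet w
  rwa [htree r r' hr hr']

variable (F)

def IsHeavy (v : V) : Prop :=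
  Fintype.card V < 2 * (F.descSet v).ncard

variable {F}

theorem IsHeavy.mem_descSet_or_mem_descSet {a b : V} (ha : F.IsHeavy a) (hb : F.IsHeavy b) :
    a ∈ F.descSet b ∨ b ∈ F.descSet a := by
  unfold IsHeavy at ha hb
  obtain ⟨w, hwa, hwb⟩ := Set.nonempty_inter_of_lt_ncard_add_ncard (s := F.descSet a)
    (t := F.descSet b) (by rw [Nat.card_eq_fintype_card]; omega)
  exact RootedForest.mem_descSet_or_mem_descSet hwa hwb

theorem exists_isHeavy [Nonempty V] (htree : F.IsTree) : ∃ v, F.IsHeavy v := by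
  obtain ⟨r, hr, -⟩ := F.exists_root_mem_descSet (Classical.arbitrary V)
  refine ⟨r, ?_⟩
  rw [IsHeavy, descSet_eq_univ_of_parent_eq_none htree hr, Set.ncard_univ, Nat.card_eq_fintype_card]
  have := Fintype.card_pos (α := V)
  omega

theorem exists_deepest_isHeavy [Nonempty V] (htree : F.IsTree) :
    ∃ v, F.IsHeavy v ∧ ∀ u, F.IsHeavy u → F.depth u ≤ F.depth v := by
  classical
  obtain ⟨v₀, hv₀⟩ := exists_isHeavy htree
  obtain ⟨v, hv, hmax⟩ := Finset.exists_max_image {u | F.IsHeavy u} F.depth ⟨v₀, by simpa⟩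
  simp only [Finset.mem_filter, Finset.mem_univ, true_and] at hv hmax
  exact ⟨v, hv, hmax⟩

theorem mem_descSet_of_isHeavy_of_deepest {v u : V} (hv : F.IsHeavy v)
    (hmax : ∀ u, F.IsHeavy u → F.depth u ≤ F.depth v) (hu : F.IsHeavy u) :
    v ∈ F.descSet u := by
  rcases hu.mem_descSet_or_mem_descSet hv with huv | hvu
  · by_cases h : u = v
    · exact h ▸ mem_descSet_self u
    · have := depth_lt_of_ancestor (ancestor_of_mem_descSet_of_ne huv h)
      exact absurd (hmax u hu) this.not_ge
  · exact hvu

theorem exists_ancestor_of_isHeavy (hcard : 1 < Fintype.card V) {v : V} (hv : F.IsHeavy v) :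
    ∃ w, F.Ancestor v w := by
  unfold IsHeavy at hv
  obtain ⟨w, hw, hne⟩ := Set.exists_ne_of_one_lt_ncard (s := F.descSet v) (by omega) v
  exact ⟨w, ancestor_of_mem_descSet_of_ne hw hne⟩

theorem isSeparator_of_isHeavy {v : V} (hv : F.IsHeavy v)
    (hchild : ∀ u, F.parent u = some v → ¬F.IsHeavy u) : IsSeparator F v :=
  ⟨fun u hu => not_lt.1 (hchild u hu), by unfold IsHeavy at hv; omega⟩

end RootedForest

open RootedForest in
/-- Spine decomposition: in a rooted tree `T` with more than one node and depth at
most `d`, there is a separator `v₁` (the one closest to the root) whose spine, the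
path `v₁, …, v_{d'}` from `v₁` up to the root, has length `d'` (the depth of `v₁`)
with `1 ≤ d' < d`; moreover, every subtree hanging off the spine (rooted at a
non-spine child `u` of a spine node `p`) has at most `|T|/2` nodes. A node `w` is
on the spine iff `w = v₁` or `w` is an ancestor of `v₁`. -/
theorem spine_decomposition (V : Type) [Fintype V] (F : RootedForest V) (d : ℕ)
    (htree : ∀ v w : V, F.parent v = none → F.parent w = none → v = w)
    (hcard : 1 < Fintype.card V) (hdepth : ∀ v, F.depth v ≤ d) :
    ∃ v : V, IsSeparator F v ∧ 1 ≤ F.depth v ∧ F.depth v < d ∧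
      ∀ u p : V, F.parent u = some p →
        (p = v ∨ F.Ancestor p v) → ¬(u = v ∨ F.Ancestor u v) →
        2 * (F.descSet u).ncard ≤ Fintype.card V := by
  have : Nonempty V := Fintype.card_pos_iff.1 (by omega)
  obtain ⟨v, hv, hmax⟩ := exists_deepest_isHeavy htree
  have hchild : ∀ u, F.parent u = some v → ¬F.IsHeavy u := fun u hu hheavy => by
    have := hmax u hheavy
    rw [F.depth_parent u v hu] at this
    omega
  obtain ⟨w, hw⟩ := exists_ancestor_of_isHeavy hcard hv
  refine ⟨v, isSeparator_of_isHeavy hv hchild, F.depth_pos v,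
    (depth_lt_of_ancestor hw).trans_le (hdepth w), fun u _ _ _ hu => not_lt.1 fun hheavy => ?_⟩
  exact hu ((mem_descSet_of_isHeavy_of_deepest hv hmax hheavy).imp_left Eq.symm)
end

section
/- Let F_1,…,F_{d'} be forests with Σ_i |F_i| ≤ 2^{k+1}, let x = ⌈2^k/(d·(k+1)²)⌉, and for each i let b_i be the smallest integer with ⌊c_k·|F_i|⌋ ≤ b_i·x. If d' < d, then Σ_{i=1}^{d'} b_i < d + 2·c_k·d·(k+1)² ≤ 2·c_{k+1}·d·(k+1)². -/
/-- `c_k = 1 + Σ_{j=1}^k 1/j²`. -/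
def cseq (k : ℕ) : ℚ := 1 + ∑ j ∈ Finset.Icc 1 k, (1 : ℚ) / (j : ℚ) ^ 2

/-- `x_0 = 1` and, for `i ≥ 1`, `x_i = ⌈2^{i-1}/(d·i²)⌉` (ceiling division). -/
def xval (d i : ℕ) : ℕ := if i = 0 then 1 else (2 ^ (i - 1) + d * i ^ 2 - 1) / (d * i ^ 2)

/-!
Each `b i` is `⌈⌊c_k a_i⌋ / x⌉`, so `b i · x < ⌊c_k a_i⌋ + x`. Summing over the `d' < d`
indices gives `(Σ b i) · x < c_k · 2^{k+1} + d · x`, and `2^k ≤ d (k+1)² x` turns the first term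
into at most `2 c_k d (k+1)² · x`; dividing by `x` gives the first inequality. The second is
`c_{k+1} = c_k + 1/(k+1)²`.
-/

lemma cseq_nonneg (k : ℕ) : 0 ≤ cseq k := by
  unfold cseq
  positivity

lemma cseq_succ (k : ℕ) : cseq (k + 1) = cseq k + 1 / ((k : ℚ) + 1) ^ 2 := by
  simp only [cseq, Finset.sum_Icc_succ_top (Nat.le_add_left 1 k), Nat.cast_succ]
  ring

lemma xval_succ (d k : ℕ) : xval d (k + 1) = 2 ^ k ⌈/⌉ (d * (k + 1) ^ 2) := by
  simp [xval, Nat.ceilDiv_eq_add_pred_div]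

lemma two_pow_le_mul_xval_succ {d : ℕ} (hd : 0 < d) (k : ℕ) :
    2 ^ k ≤ d * (k + 1) ^ 2 * xval d (k + 1) := by
  rw [xval_succ]
  exact le_smul_ceilDiv (show 0 < d * (k + 1) ^ 2 by positivity)

lemma mul_lt_add_of_minimal {n x b : ℕ} (hx : 0 < x) (hmin : ∀ m, n ≤ m * x → b ≤ m) :
    b * x < n + x := by
  rcases b with _ | m
  · omega
  · have hm : m * x < n := by
      by_contra! h
      exact absurd (hmin m h) (by omega)
    rw [Nat.succ_mul]
    omega

lemma sum_mul_le_sum_add_card_mul {ι : Type*} [Fintype ι] {n b : ι → ℕ} {x : ℕ}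
    (h : ∀ i, b i * x ≤ n i + x) : (∑ i, b i) * x ≤ ∑ i, n i + Fintype.card ι * x := by
  rw [Finset.sum_mul, ← smul_eq_mul (Fintype.card ι), ← Finset.card_univ, ← Finset.sum_const,
    ← Finset.sum_add_distrib]
  exact Finset.sum_le_sum fun i _ => h i

lemma sum_floor_mul_le {ι K : Type*} [Fintype ι] [Semifield K] [LinearOrder K]
    [IsStrictOrderedRing K] [FloorSemiring K] {c : K} (hc : 0 ≤ c) (a : ι → ℕ) :
    ((∑ i, ⌊c * a i⌋₊ : ℕ) : K) ≤ c * ∑ i, (a i : K) := by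
  push_cast
  rw [Finset.mul_sum]
  exact Finset.sum_le_sum fun i _ => Nat.floor_le (by positivity)

theorem spine_offsets_bound_general (k d d' : ℕ) (hd' : d' < d)
    (a b : Fin d' → ℕ) (hsum : ∑ i, a i ≤ 2 ^ (k + 1))
    (hb : ∀ i, ⌊cseq k * (a i : ℚ)⌋₊ ≤ b i * xval d (k + 1) ∧
      ∀ m : ℕ, ⌊cseq k * (a i : ℚ)⌋₊ ≤ m * xval d (k + 1) → b i ≤ m) :
    ((∑ i, b i : ℕ) : ℚ) < (d : ℚ) + 2 * cseq k * d * ((k : ℚ) + 1) ^ 2 ∧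
    (d : ℚ) + 2 * cseq k * d * ((k : ℚ) + 1) ^ 2 ≤
      2 * cseq (k + 1) * d * ((k : ℚ) + 1) ^ 2 := by
  set x := xval d (k + 1)
  set c := cseq k
  have hc := cseq_nonneg k
  have hxD := two_pow_le_mul_xval_succ (by omega : 0 < d) k
  have hx : 0 < x := Nat.pos_of_mul_pos_left ((Nat.two_pow_pos k).trans_le hxD)
  have hxDq : (2 : ℚ) ^ k ≤ d * ((k : ℚ) + 1) ^ 2 * x := by exact_mod_cast hxD
  have hbx : ((∑ i, b i : ℕ) : ℚ) * x ≤ ((∑ i, ⌊c * a i⌋₊ : ℕ) : ℚ) + d' * x := by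
    have := sum_mul_le_sum_add_card_mul fun i => (mul_lt_add_of_minimal hx (hb i).2).le
    rw [Fintype.card_fin] at this
    exact_mod_cast this
  have hfloor : ((∑ i, ⌊c * a i⌋₊ : ℕ) : ℚ) ≤ c * 2 ^ (k + 1) := by
    have : (∑ i, (a i : ℚ)) ≤ 2 ^ (k + 1) := by exact_mod_cast hsum
    exact (sum_floor_mul_le hc a).trans (mul_le_mul_of_nonneg_left this hc)
  have hd'x : (d' : ℚ) * x < d * x := by gcongr
  refine ⟨lt_of_mul_lt_mul_right ?_ (Nat.cast_nonneg x), ?_⟩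
  · calc ((∑ i, b i : ℕ) : ℚ) * x < c * (2 * 2 ^ k) + d * x := by rw [← pow_succ']; linarith
      _ ≤ c * (2 * (d * ((k : ℚ) + 1) ^ 2 * x)) + d * x := by gcongr
      _ = (d + 2 * c * d * ((k : ℚ) + 1) ^ 2) * x := by ring
  · rw [cseq_succ]
    have : (0 : ℚ) < ((k : ℚ) + 1) ^ 2 := by positivity
    field_simp
    nlinarith [Nat.cast_nonneg (α := ℚ) d]

/-- Let `F_1, …, F_{d'}` be forests of sizes `a i` with `Σ a i ≤ 2^{k+1}`, let
`x = x_{k+1} = ⌈2^k/(d(k+1)²)⌉`, and let `b i` be the smallest integer with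
`⌊c_k·a i⌋ ≤ b i · x`. If `d' < d` then
`Σ b i < d + 2·c_k·d·(k+1)² ≤ 2·c_{k+1}·d·(k+1)²`. -/
theorem spine_offsets_bound (k d d' : ℕ) (hd : 1 ≤ d) (hd' : d' < d)
    (a b : Fin d' → ℕ) (hsum : ∑ i, a i ≤ 2 ^ (k + 1))
    (hb : ∀ i, ⌊cseq k * (a i : ℚ)⌋₊ ≤ b i * xval d (k + 1) ∧
      ∀ m : ℕ, ⌊cseq k * (a i : ℚ)⌋₊ ≤ m * xval d (k + 1) → b i ≤ m) :
    ((∑ i, b i : ℕ) : ℚ) < (d : ℚ) + 2 * cseq k * d * ((k : ℚ) + 1) ^ 2 ∧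
    (d : ℚ) + 2 * cseq k * d * ((k : ℚ) + 1) ^ 2 ≤
      2 * cseq (k + 1) * d * ((k : ℚ) + 1) ^ 2 :=
  spine_offsets_bound_general k d d' hd' a b hsum hb
end
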